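/- Assume equation (dkq) holds. Then for all t ∈ ℝ^g and all real ξ, η with ξ ≠ η and ξ, η ≠ 0: ∑_{k=1}^g η^k · ∂_k 𝐮(ξ) = (ξη/(2(ξ−η)))·(𝐮'(ξ)·(2 − 𝐮(η)) − 𝐮'(η)·(2 − 𝐮(ξ))), i.e. ∂(η)𝐮(ξ) = 𝓣_ξ^η ∂_x 𝐮(ξ) where ∂(η) = ∑_{k=1}^g η^k ∂_k and 𝓣_ξ^η is the generalized translation with h = 2 − 𝐮. -/

import Mathlib

open scoped BigOperators

/-- Partial derivative `∂_i` (1-based index) on functions of `t : Fin g → ℝ`;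
`∂_i ≡ 0` for `i = 0` or `i > g` (in particular `∂_{g+1} ≡ 0`). -/
noncomputable def pd {g : ℕ} {E : Type*} [NormedAddCommGroup E] [NormedSpace ℝ E]
    (i : ℕ) (f : (Fin g → ℝ) → E) : (Fin g → ℝ) → E :=
  fun t => if h : 1 ≤ i ∧ i ≤ g then
    fderiv ℝ f t (Pi.single (⟨i - 1, by omega⟩ : Fin g) 1) else 0

/-- The generating function `𝐮(ξ) = ∑_{i=1}^g u_i ξ^i`. -/
noncomputable def bfu {g : ℕ} (u : ℕ → (Fin g → ℝ) → ℝ) (ξ : ℝ) :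
    (Fin g → ℝ) → ℝ :=
  fun t => ∑ i ∈ Finset.Icc 1 g, u i t * ξ ^ i

/-- `𝐮'(ξ) = ∑_{i=1}^g u_i' ξ^i` (prime is `∂_x = ∂_1`). -/
noncomputable def bfu1 {g : ℕ} (u : ℕ → (Fin g → ℝ) → ℝ) (ξ : ℝ) :
    (Fin g → ℝ) → ℝ :=
  fun t => ∑ i ∈ Finset.Icc 1 g, pd 1 (u i) t * ξ ^ i

/-- `𝐮''(ξ) = ∑_{i=1}^g u_i'' ξ^i`. -/
noncomputable def bfu2 {g : ℕ} (u : ℕ → (Fin g → ℝ) → ℝ) (ξ : ℝ) :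
    (Fin g → ℝ) → ℝ :=
  fun t => ∑ i ∈ Finset.Icc 1 g, pd 1 (pd 1 (u i)) t * ξ ^ i

/-- `𝐮'''(ξ) = ∑_{i=1}^g u_i''' ξ^i`. -/
noncomputable def bfu3 {g : ℕ} (u : ℕ → (Fin g → ℝ) → ℝ) (ξ : ℝ) :
    (Fin g → ℝ) → ℝ :=
  fun t => ∑ i ∈ Finset.Icc 1 g, pd 1 (pd 1 (pd 1 (u i))) t * ξ ^ i

/-- `D_k(2 − 𝐮(ξ)) = (1/2)(2·ξ^{1−k} + ∑_{i=1}^{k−1} (−u_i) ξ^{i−k+1})`,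
the operator `D_k` applied to the Laurent-type polynomial `2 − 𝐮(ξ)`. -/
noncomputable def DkA {g : ℕ} (u : ℕ → (Fin g → ℝ) → ℝ) (k : ℕ) (ξ : ℝ) :
    (Fin g → ℝ) → ℝ :=
  fun t => (1/2 : ℝ) * (2 * ξ ^ (1 - (k:ℤ))
    + ∑ i ∈ Finset.Icc 1 (k-1), (-(u i t)) * ξ ^ ((i:ℤ) - (k:ℤ) + 1))

/-- `D_k(𝐮'(ξ)) = (1/2)∑_{i=1}^{k−1} u_i' ξ^{i−k+1}`. -/
noncomputable def DkB {g : ℕ} (u : ℕ → (Fin g → ℝ) → ℝ) (k : ℕ) (ξ : ℝ) :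
    (Fin g → ℝ) → ℝ :=
  fun t => (1/2 : ℝ) * ∑ i ∈ Finset.Icc 1 (k-1), pd 1 (u i) t * ξ ^ ((i:ℤ) - (k:ℤ) + 1)

/-! Multiplying (dkq) by `η ^ k` and summing over `k`, each side becomes a sum of the form
`∑ₖ ηᵏ (Dₖ p)(ξ)`. Exchanging the two summations turns the inner sums into geometric sums, and
`2 (ξ - η) ∑ₖ ηᵏ (Dₖ p)(ξ) = ξ η p(η) - η^(g+1) ξ^(1-g) p(ξ)`. For `p = 2 - 𝐮` and `p = 𝐮'` the
boundary terms `η^(g+1) ξ^(1-g) p(ξ)` cancel in `D(2 - 𝐮) 𝐮' - D(𝐮') (2 - 𝐮)`, leaving the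
generalized translation. -/

open Finset

lemma sub_mul_sum_Icc_pow_mul_zpow {K : Type*} [Field K] {ξ : K} (hξ : ξ ≠ 0) (η : K)
    {m n : ℕ} (hmn : m ≤ n) :
    (ξ - η) * ∑ k ∈ Icc (m + 1) n, η ^ k * ξ ^ ((m : ℤ) - k + 1)
      = η ^ (m + 1) * ξ - η ^ (n + 1) * ξ ^ ((m : ℤ) - n + 1) := by
  induction n, hmn using Nat.le_induction with
  | base => simp
  | succ n _ ih =>
    rw [sum_Icc_succ_top (by omega), mul_add, ih, zpow_add_one₀ hξ]
    push_cast
    ring_nf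

lemma sub_mul_sum_Icc_pow_mul_sum_Icc_zpow {K : Type*} [Field K] {ξ : K} (hξ : ξ ≠ 0) (η : K)
    (g : ℕ) (c : ℕ → K) :
    (ξ - η) * ∑ k ∈ Icc 1 g, η ^ k * ∑ i ∈ Icc 1 (k - 1), c i * ξ ^ ((i : ℤ) - k + 1)
      = ξ * η * ∑ i ∈ Icc 1 g, c i * η ^ i
        - η ^ (g + 1) * ξ ^ (1 - (g : ℤ)) * ∑ i ∈ Icc 1 g, c i * ξ ^ i := by
  have swap : ∑ k ∈ Icc 1 g, η ^ k * ∑ i ∈ Icc 1 (k - 1), c i * ξ ^ ((i : ℤ) - k + 1)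
      = ∑ i ∈ Icc 1 g, c i * ∑ k ∈ Icc (i + 1) g, η ^ k * ξ ^ ((i : ℤ) - k + 1) := by
    simp only [mul_sum]
    rw [sum_comm' (t' := Icc 1 g) (s' := fun i => Icc (i + 1) g)
      (fun k i => by simp only [mem_Icc]; omega)]
    exact sum_congr rfl fun i _ => sum_congr rfl fun k _ => by ring
  rw [swap, mul_sum, mul_sum, mul_sum, ← sum_sub_distrib]
  refine sum_congr rfl fun i hi => ?_
  have hshift : ξ ^ ((i : ℤ) - g + 1) = ξ ^ (1 - (g : ℤ)) * ξ ^ i := by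
    rw [← zpow_natCast ξ i, ← zpow_add₀ hξ]
    ring_nf
  calc (ξ - η) * (c i * ∑ k ∈ Icc (i + 1) g, η ^ k * ξ ^ ((i : ℤ) - k + 1))
      = c i * (η ^ (i + 1) * ξ - η ^ (g + 1) * ξ ^ ((i : ℤ) - g + 1)) := by
        rw [← sub_mul_sum_Icc_pow_mul_zpow hξ η (mem_Icc.mp hi).2]
        ring
    _ = ξ * η * (c i * η ^ i) - η ^ (g + 1) * ξ ^ (1 - (g : ℤ)) * (c i * ξ ^ i) := by
        rw [hshift]
        ring

section

variable {g : ℕ} (u : ℕ → (Fin g → ℝ) → ℝ) (t : Fin g → ℝ) {ξ : ℝ}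

lemma two_mul_sub_mul_sum_pow_mul_DkA (hξ : ξ ≠ 0) (η : ℝ) :
    2 * (ξ - η) * ∑ k ∈ Icc 1 g, η ^ k * DkA u k ξ t
      = ξ * η * (2 - bfu u η t) - η ^ (g + 1) * ξ ^ (1 - (g : ℤ)) * (2 - bfu u ξ t) := by
  have hsplit : ∑ k ∈ Icc 1 g, η ^ k * DkA u k ξ t
      = ∑ k ∈ Icc 1 g, η ^ k * ξ ^ (1 - (k : ℤ))
        + 1 / 2 * ∑ k ∈ Icc 1 g, η ^ k
          * ∑ i ∈ Icc 1 (k - 1), -u i t * ξ ^ ((i : ℤ) - k + 1) := by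
    rw [mul_sum, ← sum_add_distrib]
    refine sum_congr rfl fun k _ => ?_
    rw [DkA]
    ring
  have hbfu (x : ℝ) : ∑ i ∈ Icc 1 g, -u i t * x ^ i = -bfu u x t := by
    simp only [bfu, neg_mul, sum_neg_distrib]
  have hconst := sub_mul_sum_Icc_pow_mul_zpow hξ η (Nat.zero_le g)
  have hlower := sub_mul_sum_Icc_pow_mul_sum_Icc_zpow hξ η g (fun i => -u i t)
  rw [hbfu, hbfu] at hlower
  simp only [Nat.cast_zero, zero_sub, zero_add, neg_add_eq_sub] at hconst
  rw [hsplit]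
  linear_combination 2 * hconst + hlower

lemma two_mul_sub_mul_sum_pow_mul_DkB (hξ : ξ ≠ 0) (η : ℝ) :
    2 * (ξ - η) * ∑ k ∈ Icc 1 g, η ^ k * DkB u k ξ t
      = ξ * η * bfu1 u η t - η ^ (g + 1) * ξ ^ (1 - (g : ℤ)) * bfu1 u ξ t := by
  have hlower := sub_mul_sum_Icc_pow_mul_sum_Icc_zpow hξ η g (fun i => pd 1 (u i) t)
  simp only [DkB, bfu1, mul_left_comm _ (1 / 2 : ℝ), ← mul_sum]
  linear_combination hlower

end

theorem statement16_general (g : ℕ) (u : ℕ → (Fin g → ℝ) → ℝ)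
    (hdkq : ∀ k, 1 ≤ k → k ≤ g → ∀ t, ∀ ξ : ℝ, ξ ≠ 0 →
      pd k (bfu u ξ) t = DkA u k ξ t * bfu1 u ξ t - DkB u k ξ t * (2 - bfu u ξ t)) :
    ∀ t, ∀ ξ η : ℝ, ξ ≠ 0 → η ≠ 0 → ξ ≠ η →
      ∑ k ∈ Finset.Icc 1 g, η ^ k * pd k (bfu u ξ) t
        = ξ * η / (2 * (ξ - η))
          * (bfu1 u ξ t * (2 - bfu u η t) - bfu1 u η t * (2 - bfu u ξ t)) := by
  intro t ξ η hξ _ hne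
  have hA := two_mul_sub_mul_sum_pow_mul_DkA u t hξ η
  have hB := two_mul_sub_mul_sum_pow_mul_DkB u t hξ η
  rw [sum_congr rfl fun k hk => by rw [hdkq k (mem_Icc.mp hk).1 (mem_Icc.mp hk).2 t ξ hξ],
    div_mul_eq_mul_div, eq_div_iff (mul_ne_zero two_ne_zero (sub_ne_zero.mpr hne))]
  simp only [mul_sub, sum_sub_distrib, ← mul_assoc, ← sum_mul]
  linear_combination bfu1 u ξ t * hA - (2 - bfu u ξ t) * hB

/-- Assume equation (dkq). Then for all `t` and all real `ξ ≠ η`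
with `ξ, η ≠ 0`:
`∑_{k=1}^g η^k·∂_k 𝐮(ξ) = (ξη/(2(ξ−η)))·(𝐮'(ξ)(2 − 𝐮(η)) − 𝐮'(η)(2 − 𝐮(ξ)))`,
i.e. `∂(η)𝐮(ξ) = 𝓣_ξ^η ∂_x 𝐮(ξ)` where `∂(η) = ∑ η^k ∂_k` and `𝓣_ξ^η` is the
generalized translation with `h = 2 − 𝐮`. -/
theorem statement16 (g : ℕ) (hg : 1 ≤ g) (u : ℕ → (Fin g → ℝ) → ℝ)
    (hu : ∀ i, ContDiff ℝ (⊤ : ℕ∞) (u i))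
    (hdkq : ∀ k, 1 ≤ k → k ≤ g → ∀ t, ∀ ξ : ℝ, ξ ≠ 0 →
      pd k (bfu u ξ) t = DkA u k ξ t * bfu1 u ξ t - DkB u k ξ t * (2 - bfu u ξ t)) :
    ∀ t, ∀ ξ η : ℝ, ξ ≠ 0 → η ≠ 0 → ξ ≠ η →
      ∑ k ∈ Finset.Icc 1 g, η ^ k * pd k (bfu u ξ) t
        = ξ * η / (2 * (ξ - η))
          * (bfu1 u ξ t * (2 - bfu u η t) - bfu1 u η t * (2 - bfu u ξ t)) :=
  statement16_general g u hdkq
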